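/- (Theorem 2, quantitative lower bound.) There exists an integer M_0 such that for all integers M ≥ M_0 and all positive integers N_K with N_K > 2√M, the hybrid distribution p(n) = (1/(2^M (N_K+1))) · Σ_{k=0}^{N_K} C(M, n − k) satisfies Σ_{n=−1}^{N_K+M} (√(p(n+1)) − √(p(n)))² ≥ 1/(5 (N_K+1) √M) (with p(n) := 0 for n < 0 or n > N_K + M). Consequently, the canonical phase variance of the hybrid scheme's equivalent two-mode state on N = N_K + M total resources is Ω(N^{−3/2}). -/

import Mathlib

/-- The binomial coefficient `C(M, j)` extended to integer `j`,
with `C(M, j) = 0` for `j < 0` (and automatically for `j > M`). -/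
def binomZ (M : ℕ) (j : ℤ) : ℕ :=
  if 0 ≤ j then Nat.choose M j.toNat else 0

/-- The hybrid distribution `p(n) = (1/(2^M (N_K+1))) · Σ_{k=0}^{N_K} C(M, n − k)`,
the squared coefficients of the equivalent two-mode state of the hybrid scheme
(automatically `0` for `n < 0` or `n > N_K + M`). -/
noncomputable def hybridP (NK M : ℕ) (n : ℤ) : ℝ :=
  (∑ k ∈ Finset.range (NK + 1), (binomZ M (n - k) : ℝ)) / (2 ^ M * ((NK : ℝ) + 1))

/-! By telescoping, `p(n) - p(n - 1) = (C(M, n) - C(M, n - N_K - 1)) / (2^M (N_K + 1))`. As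
`0 ≤ p ≤ 1 / (N_K + 1)`, each term `(√a - √b)²` is at least `(N_K + 1) (a - b)² / 4`, and by
Vandermonde `Σ_n (C(M, n) - C(M, n - d))² = 2 C(2M, M) - 2 C(2M, M + d)`. When `d² > 4M` the
Gaussian decay `C(2M, M + d) ≤ C(2M, M) e^{-d²/(2M)}` makes the cross term at most `C(2M, M) / 7`,
and `C(2M, M) ≥ 4^M / (2√M)` gives the bound. -/

namespace Nat

theorem sixteen_pow_le_four_mul_mul_centralBinom_sq {n : ℕ} (hn : 1 ≤ n) :
    16 ^ n ≤ 4 * n * centralBinom n ^ 2 := by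
  induction n, hn using Nat.le_induction with
  | base => decide
  | succ m _ ih =>
    refine Nat.le_of_mul_le_mul_left ?_ (succ_pos m)
    calc (m + 1) * 16 ^ (m + 1) = 16 * ((m + 1) * 16 ^ m) := by ring
      _ ≤ 16 * ((m + 1) * (4 * m * centralBinom m ^ 2)) := by gcongr
      _ = 16 * ((m + 1) * (4 * m) * centralBinom m ^ 2) := by ring
      _ ≤ 16 * ((2 * m + 1) ^ 2 * centralBinom m ^ 2) := by gcongr; nlinarith
      _ = (m + 1) * (4 * (m + 1) * centralBinom (m + 1) ^ 2) := by
        rw [show (m + 1) * (4 * (m + 1) * centralBinom (m + 1) ^ 2)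
          = 4 * ((m + 1) * centralBinom (m + 1)) ^ 2 by ring, succ_mul_centralBinom_succ]
        ring

theorem sum_range_choose_mul_choose_add (M d : ℕ) :
    ∑ i ∈ Finset.range (M + 1), M.choose i * M.choose (i + d) = (2 * M).choose (M + d) := by
  rw [two_mul, add_choose_eq, Finset.Nat.sum_antidiagonal_eq_sum_range_succ_mk,
    show (M + d).succ = d + (M + 1) by omega, Finset.sum_range_add _ d (M + 1)]
  have hlow : ∀ k ∈ Finset.range d, M.choose k * M.choose (M + d - k) = 0 := fun k hk => by
    rw [choose_eq_zero_of_lt (n := M) (k := M + d - k) (by simp at hk; omega), mul_zero]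
  dsimp only
  rw [Finset.sum_eq_zero hlow, zero_add]
  refine Finset.sum_congr rfl fun i hi => ?_
  rw [Finset.mem_range] at hi
  rw [show M + d - (d + i) = M - i by omega, choose_symm (by omega), mul_comm, add_comm i]

end Nat

theorem Real.four_pow_le_two_mul_sqrt_mul_centralBinom {n : ℕ} (hn : 1 ≤ n) :
    (4 : ℝ) ^ n ≤ 2 * √n * n.centralBinom := by
  refine (pow_le_pow_iff_left₀ (by positivity) (by positivity) two_ne_zero).mp ?_
  calc ((4 : ℝ) ^ n) ^ 2 = 16 ^ n := by rw [← pow_mul, mul_comm, pow_mul]; norm_num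
    _ ≤ 4 * n * n.centralBinom ^ 2 := by
      exact_mod_cast Nat.sixteen_pow_le_four_mul_mul_centralBinom_sq hn
    _ = (2 * √n * n.centralBinom) ^ 2 := by
      rw [mul_pow, mul_pow, Real.sq_sqrt n.cast_nonneg]; ring

theorem sub_le_add_add_one_mul_exp {m e : ℝ} (he : 0 ≤ e) (hem : e + 1 ≤ m) :
    m - e ≤ (m + e + 1) * Real.exp (-((2 * e + 1) / (2 * m))) := by
  have hm : 0 < m := by linarith
  set x := (2 * e + 1) / (2 * m) with hx_def
  have hx : (m + e + 1) * x ≤ 2 * e + 1 := by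
    calc (m + e + 1) * x ≤ 2 * m * x := by gcongr; linarith
      _ = 2 * e + 1 := by rw [hx_def]; field_simp
  calc m - e ≤ (m + e + 1) * (1 - x) := by linarith
    _ ≤ (m + e + 1) * Real.exp (-x) := by
      gcongr; linarith [Real.add_one_le_exp (-x)]

theorem choose_add_le_centralBinom_mul_exp {M d : ℕ} (hd : d ≤ M) :
    ((2 * M).choose (M + d) : ℝ) ≤ M.centralBinom * Real.exp (-((d : ℝ) ^ 2 / (2 * M))) := by
  induction d with
  | zero => simp [Nat.centralBinom_eq_two_mul_choose]
  | succ e ih =>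
    have he : (e : ℝ) + 1 ≤ M := by exact_mod_cast hd
    have hrec : ((2 * M).choose (M + (e + 1)) : ℝ) * (M + e + 1)
        = (2 * M).choose (M + e) * (M - e) := by
      have h := congrArg (Nat.cast : ℕ → ℝ) (Nat.choose_succ_right_eq (2 * M) (M + e))
      push_cast [Nat.cast_sub (show M + e ≤ 2 * M by omega)] at h
      linear_combination h
    have hexp : Real.exp (-((e : ℝ) ^ 2 / (2 * M))) * Real.exp (-((2 * e + 1) / (2 * M)))
        = Real.exp (-(((e + 1 : ℕ) : ℝ) ^ 2 / (2 * M))) := by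
      rw [← Real.exp_add]; push_cast; ring_nf
    refine le_of_mul_le_mul_right ?_ (by positivity : (0 : ℝ) < M + e + 1)
    calc ((2 * M).choose (M + (e + 1)) : ℝ) * (M + e + 1)
        = (2 * M).choose (M + e) * (M - e) := hrec
      _ ≤ (M.centralBinom * Real.exp (-((e : ℝ) ^ 2 / (2 * M))))
          * ((M + e + 1) * Real.exp (-((2 * e + 1) / (2 * M)))) := by
        gcongr
        · linarith
        · exact ih (by omega)
        · exact sub_le_add_add_one_mul_exp (by positivity) he
      _ = _ := by rw [← hexp]; ring

theorem seven_mul_choose_add_le_centralBinom {M d : ℕ} (hd : 4 * M < d ^ 2) :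
    7 * ((2 * M).choose (M + d) : ℝ) ≤ M.centralBinom := by
  rcases le_or_gt d M with hdM | hMd
  · have hM : (0 : ℝ) < M := by exact_mod_cast (show 0 < M by nlinarith)
    have h2 : 2 ≤ (d : ℝ) ^ 2 / (2 * M) := by
      rw [le_div_iff₀ (by positivity)]; exact_mod_cast (by omega : 2 * (2 * M) ≤ d ^ 2)
    have h7 : 7 * Real.exp (-((d : ℝ) ^ 2 / (2 * M))) ≤ 1 := by
      have he1 := Real.exp_one_gt_d9
      have he2 : Real.exp 2 ≤ Real.exp ((d : ℝ) ^ 2 / (2 * M)) := Real.exp_le_exp.mpr h2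
      rw [Real.exp_neg, ← div_eq_mul_inv, div_le_one (Real.exp_pos _)]
      rw [show (2 : ℝ) = 1 + 1 by norm_num, Real.exp_add] at he2
      nlinarith
    calc 7 * ((2 * M).choose (M + d) : ℝ)
        ≤ 7 * (M.centralBinom * Real.exp (-((d : ℝ) ^ 2 / (2 * M)))) := by
          gcongr; exact choose_add_le_centralBinom_mul_exp hdM
      _ ≤ M.centralBinom := by nlinarith [(M.centralBinom.cast_nonneg : (0 : ℝ) ≤ _)]
  · simp [Nat.choose_eq_zero_of_lt (show 2 * M < M + d by omega)]

theorem Real.sq_sub_le_four_mul_mul_sq_sqrt_sub {a b c : ℝ} (ha : 0 ≤ a) (hb : 0 ≤ b)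
    (hac : a ≤ c) (hbc : b ≤ c) : (a - b) ^ 2 ≤ 4 * c * (√a - √b) ^ 2 := by
  have hsum : (√a + √b) ^ 2 ≤ 4 * c := by
    nlinarith [sq_nonneg (√a - √b), Real.sq_sqrt ha, Real.sq_sqrt hb]
  calc (a - b) ^ 2 = (√a + √b) ^ 2 * (√a - √b) ^ 2 := by
        rw [← mul_pow]; congr 1
        nlinarith [Real.sq_sqrt ha, Real.sq_sqrt hb]
    _ ≤ 4 * c * (√a - √b) ^ 2 := by gcongr

theorem Finset.sum_range_add_comp_sub {R : Type*} [AddCommMonoid R] {f : ℤ → R}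
    (hf : ∀ j < 0, f j = 0) (s m : ℕ) :
    ∑ i ∈ range (s + m), f (i - s) = ∑ i ∈ range m, f i := by
  rw [sum_range_add, sum_eq_zero fun i hi => hf _ (by simp at hi; omega), zero_add]
  simp

theorem binomZ_natCast (M i : ℕ) : binomZ M i = M.choose i := by
  simp [binomZ]

theorem binomZ_of_neg {M : ℕ} {j : ℤ} (h : j < 0) : binomZ M j = 0 := by
  simp [binomZ, not_le.mpr h]

theorem binomZ_of_lt {M : ℕ} {j : ℤ} (h : (M : ℤ) < j) : binomZ M j = 0 := by
  simp [binomZ, show 0 ≤ j by omega, Nat.choose_eq_zero_of_lt (show M < j.toNat by omega)]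

theorem sum_range_binomZ_mul_binomZ_sub {M d n : ℕ} (hn : d + M < n) :
    ∑ i ∈ Finset.range n, binomZ M i * binomZ M (i - d) = (2 * M).choose (M + d) := by
  obtain ⟨m, rfl⟩ : ∃ m, n = d + m := ⟨n - d, by omega⟩
  calc ∑ i ∈ Finset.range (d + m), binomZ M i * binomZ M (i - d)
      = ∑ i ∈ Finset.range (d + m), binomZ M (i - d + d) * binomZ M (i - d) := by simp
    _ = ∑ i ∈ Finset.range m, M.choose (i + d) * M.choose i :=
        Finset.sum_range_add_comp_sub (f := fun j => binomZ M (j + d) * binomZ M j)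
          (fun j hj => by simp [binomZ_of_neg hj]) d m |>.trans
          (Finset.sum_congr rfl fun i _ => by push_cast [← binomZ_natCast]; rfl)
    _ = ∑ i ∈ Finset.range (M + 1), M.choose i * M.choose (i + d) := by
        refine (Finset.sum_subset (by simp; omega) fun i _ hi => ?_).symm.trans
          (Finset.sum_congr rfl fun i _ => mul_comm _ _)
        simp [Nat.choose_eq_zero_of_lt (show M < i by simpa using hi)]
    _ = (2 * M).choose (M + d) := Nat.sum_range_choose_mul_choose_add M d

theorem sum_range_sq_binomZ_sub_binomZ_sub (M d : ℕ) :
    ∑ i ∈ Finset.range (d + (M + 1)), ((binomZ M i : ℝ) - binomZ M (i - d)) ^ 2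
      = 2 * M.centralBinom - 2 * (2 * M).choose (M + d) := by
  have hsq : ∀ n, M < n → ∑ i ∈ Finset.range n, (binomZ M i : ℝ) ^ 2 = M.centralBinom := by
    intro n hn
    simpa [sq, Nat.centralBinom_eq_two_mul_choose] using congrArg (Nat.cast : ℕ → ℝ)
      (sum_range_binomZ_mul_binomZ_sub (M := M) (d := 0) (by omega : 0 + M < n))
  have hshift : ∑ i ∈ Finset.range (d + (M + 1)), (binomZ M (i - d) : ℝ) ^ 2
      = ∑ i ∈ Finset.range (M + 1), (binomZ M i : ℝ) ^ 2 :=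
    Finset.sum_range_add_comp_sub (f := fun j => (binomZ M j : ℝ) ^ 2)
      (fun j hj => by simp [binomZ_of_neg hj]) d (M + 1)
  have hcross : ∑ i ∈ Finset.range (d + (M + 1)), (binomZ M i : ℝ) * binomZ M (i - d)
      = (2 * M).choose (M + d) := by
    exact_mod_cast sum_range_binomZ_mul_binomZ_sub (by omega)
  simp only [sub_sq, Finset.sum_add_distrib, Finset.sum_sub_distrib, mul_assoc,
    ← Finset.mul_sum, hshift, hcross, hsq _ (by omega : M < d + (M + 1)), hsq _ M.lt_succ_self]
  ring

theorem sum_range_binomZ_sub_le (M L : ℕ) (n : ℤ) :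
    ∑ k ∈ Finset.range L, binomZ M (n - k) ≤ 2 ^ M := by
  classical
  calc ∑ k ∈ Finset.range L, binomZ M (n - k)
      = ∑ j ∈ (Finset.range L).image (fun k : ℕ => n - k), binomZ M j :=
        (Finset.sum_image fun a _ b _ hab => by simpa using hab).symm
    _ ≤ ∑ j ∈ (Finset.range (M + 1)).map Nat.castEmbedding, binomZ M j := by
        refine Finset.sum_le_sum_of_ne_zero fun j _ hj => ?_
        have h0 : 0 ≤ j := not_lt.mp fun h => hj (binomZ_of_neg h)
        have hM : j ≤ M := not_lt.mp fun h => hj (binomZ_of_lt h)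
        simp only [Finset.mem_map, Finset.mem_range, Nat.castEmbedding_apply]
        exact ⟨j.toNat, by omega, by omega⟩
    _ = 2 ^ M := by simp [binomZ_natCast, Nat.sum_range_choose]

section hybridP

variable (NK M : ℕ)

theorem hybridP_nonneg (n : ℤ) : 0 ≤ hybridP NK M n := by
  unfold hybridP; positivity

theorem hybridP_le_inv (n : ℤ) : hybridP NK M n ≤ ((NK : ℝ) + 1)⁻¹ := by
  have h : (∑ k ∈ Finset.range (NK + 1), (binomZ M (n - k) : ℝ)) ≤ 2 ^ M := by
    exact_mod_cast sum_range_binomZ_sub_le M (NK + 1) n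
  calc hybridP NK M n ≤ 2 ^ M / (2 ^ M * ((NK : ℝ) + 1)) := by unfold hybridP; gcongr
    _ = ((NK : ℝ) + 1)⁻¹ := by field_simp

theorem hybridP_sub_hybridP_sub_one (n : ℤ) :
    hybridP NK M n - hybridP NK M (n - 1)
      = ((binomZ M n : ℝ) - binomZ M (n - (NK + 1 : ℕ))) / (2 ^ M * ((NK : ℝ) + 1)) := by
  unfold hybridP
  rw [← sub_div, ← Finset.sum_sub_distrib]
  congr 1
  convert Finset.sum_range_sub' (fun k : ℕ => (binomZ M (n - k) : ℝ)) (NK + 1) using 2 with k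
  · push_cast; ring_nf
  · simp

theorem sum_sq_sqrt_hybridP_sub_ge :
    ((M.centralBinom : ℝ) - (2 * M).choose (M + (NK + 1))) / (2 * 4 ^ M * ((NK : ℝ) + 1))
      ≤ ∑ i ∈ Finset.range (NK + M + 2),
          (√(hybridP NK M i) - √(hybridP NK M (i - 1))) ^ 2 := by
  set D : ℝ := (NK : ℝ) + 1
  have hD : 0 < D := by positivity
  have hterm (i : ℕ) : ((binomZ M i : ℝ) - binomZ M (i - (NK + 1 : ℕ))) ^ 2 / (4 * 4 ^ M * D)
      ≤ (√(hybridP NK M i) - √(hybridP NK M (i - 1))) ^ 2 := by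
    have h := Real.sq_sub_le_four_mul_mul_sq_sqrt_sub (hybridP_nonneg NK M i)
      (hybridP_nonneg NK M (i - 1)) (hybridP_le_inv NK M i) (hybridP_le_inv NK M (i - 1))
    rw [hybridP_sub_hybridP_sub_one, div_pow, div_le_iff₀ (by positivity)] at h
    rw [div_le_iff₀ (by positivity), show (4 : ℝ) ^ M = (2 ^ M) ^ 2 by
      rw [← pow_mul, mul_comm, pow_mul]; norm_num]
    calc _ ≤ 4 * D⁻¹ * (√(hybridP NK M i) - √(hybridP NK M (i - 1))) ^ 2 * (2 ^ M * D) ^ 2 := h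
      _ = _ := by field_simp
  calc _ = ∑ i ∈ Finset.range (NK + M + 2),
        ((binomZ M i : ℝ) - binomZ M (i - (NK + 1 : ℕ))) ^ 2 / (4 * 4 ^ M * D) := by
        rw [← Finset.sum_div, show NK + M + 2 = (NK + 1) + (M + 1) by ring,
          sum_range_sq_binomZ_sub_binomZ_sub]
        field_simp; ring
    _ ≤ _ := Finset.sum_le_sum fun i _ => hterm i

end hybridP

/-- Theorem 2, quantitative lower bound: for all sufficiently large `M` and all
positive `N_K > 2√M`, the canonical Collett phase variance
`Σ_{n=−1}^{N_K+M} (√(p(n+1)) − √(p(n)))²` of the hybrid scheme's equivalent two-mode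
state is at least `1/(5 (N_K+1) √M)`; hence it is `Ω(N^{−3/2})` in `N = N_K + M`. -/
theorem stmt17 :
    ∃ M₀ : ℕ, ∀ M : ℕ, M₀ ≤ M → ∀ NK : ℕ, 0 < NK → 2 * Real.sqrt M < NK →
      1 / (5 * ((NK : ℝ) + 1) * Real.sqrt M)
      ≤ ∑ i ∈ Finset.range (NK + M + 2),
          (Real.sqrt (hybridP NK M ((i : ℤ) - 1 + 1))
            - Real.sqrt (hybridP NK M ((i : ℤ) - 1))) ^ 2 := by
  refine ⟨1, fun M hM NK _ hNK => ?_⟩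
  have hd : 4 * M < (NK + 1) ^ 2 := by
    have : (4 * M : ℝ) < NK ^ 2 := by
      nlinarith [Real.sqrt_nonneg (M : ℝ), Real.sq_sqrt (M.cast_nonneg : (0 : ℝ) ≤ M)]
    have : 4 * M < NK ^ 2 := by exact_mod_cast this
    nlinarith
  have hX := seven_mul_choose_add_le_centralBinom hd
  have hB := Real.four_pow_le_two_mul_sqrt_mul_centralBinom hM
  simp only [sub_add_cancel]
  refine le_trans ?_ (sum_sq_sqrt_hybridP_sub_ge NK M)
  have hsqrt : 0 < √(M : ℝ) := Real.sqrt_pos.mpr (by exact_mod_cast hM)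
  rw [div_le_div_iff₀ (by positivity) (by positivity)]
  have h1 := mul_le_mul_of_nonneg_right hB (by positivity : (0 : ℝ) ≤ NK + 1)
  have h2 := mul_le_mul_of_nonneg_right hX (by positivity : (0 : ℝ) ≤ (NK + 1) * √(M : ℝ))
  have h3 : (0 : ℝ) ≤ M.centralBinom * ((NK + 1) * √(M : ℝ)) := by positivity
  linarith
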